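/- If f ∈ C(𝕋) and E ⊆ 𝕋 is a compact set such that {sₙf|_E : n ∈ ℕ} is dense in C(E), then E has Lebesgue measure zero. -/

import Mathlib

/-! Density lets `sₙ f` approximate, uniformly on `E`, a constant of arbitrarily large modulus `t`,
so `|sₙ f| ≥ t` on `E` for some `n`. By Chebyshev's inequality and Bessel's inequality,
`t² |E| ≤ ‖sₙ f‖₂² ≤ ‖f‖₂²` for every `t`, which forces `|E| = 0`. -/

open MeasureTheory Complex Filter Topology Set TopologicalSpace

noncomputable section

instance : Fact (0 < 2 * Real.pi) := ⟨by positivity⟩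

/-- The unit circle ℝ/2πℤ. -/
abbrev UnitCircle := AddCircle (2 * Real.pi)

/-- The n-th partial sum of the Fourier series of `f`. -/
noncomputable def partialSum (n : ℕ) (f : UnitCircle → ℂ) : C(UnitCircle, ℂ) :=
  ∑ k ∈ Finset.Icc (-(n : ℤ)) (n : ℤ), fourierCoeff f k • fourier k

theorem Orthonormal.norm_sum_inner_smul_le {ι 𝕜 V : Type*} [RCLike 𝕜] [NormedAddCommGroup V]
    [InnerProductSpace 𝕜 V] {v : ι → V} (hv : Orthonormal 𝕜 v) (s : Finset ι) (x : V) :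
    ‖∑ i ∈ s, inner 𝕜 (v i) x • v i‖ ≤ ‖x‖ := by
  refine le_of_sq_le_sq ?_ (norm_nonneg x)
  have hsq : ‖∑ i ∈ s, inner 𝕜 (v i) x • v i‖ ^ 2 = ∑ i ∈ s, ‖inner 𝕜 (v i) x‖ ^ 2 := by
    rw [← RCLike.ofReal_inj (K := 𝕜)]
    push_cast
    rw [← inner_self_eq_norm_sq_to_K, hv.inner_sum]
    simp_rw [RCLike.conj_mul]
  exact hsq ▸ hv.sum_inner_products_le x

theorem Dense.exists_forall_le_norm {X V : Type*} [TopologicalSpace X] [CompactSpace X]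
    [NormedAddCommGroup V] [NormedSpace ℝ V] [Nontrivial V] {S : Set C(X, V)} (hS : Dense S)
    {t : ℝ} (ht : 0 ≤ t) : ∃ g ∈ S, ∀ x, t ≤ ‖g x‖ := by
  obtain ⟨v, hv⟩ := exists_norm_eq V (by linarith : 0 ≤ t + 1)
  obtain ⟨g, hg, hgS⟩ := Metric.dense_iff.mp hS (ContinuousMap.const X v) 1 one_pos
  refine ⟨g, hgS, fun x => ?_⟩
  have hclose : ‖v - g x‖ < 1 := by
    rw [← dist_eq_norm]
    exact (ContinuousMap.dist_apply_le_dist (f := ContinuousMap.const X v) x).trans_lt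
      (Metric.mem_ball'.mp hg)
  linarith [norm_sub_norm_le v (g x)]

section ContinuousL2

variable {X 𝕜 : Type*} [TopologicalSpace X] [CompactSpace X] [MeasurableSpace X] [BorelSpace X]
  [RCLike 𝕜] (μ : Measure X) [IsFiniteMeasure μ]

theorem ContinuousMap.norm_toLp_two_sq (g : C(X, 𝕜)) :
    ‖ContinuousMap.toLp 2 μ 𝕜 g‖ ^ 2 = ∫ x, ‖g x‖ ^ 2 ∂μ := by
  rw [← RCLike.ofReal_inj (K := 𝕜), ← integral_ofReal]
  push_cast
  rw [← inner_self_eq_norm_sq_to_K, ContinuousMap.inner_toLp]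
  simp_rw [RCLike.mul_conj]

theorem ContinuousMap.sq_mul_measureReal_le_norm_toLp_sq {g : C(X, 𝕜)} {s : Set X} {t : ℝ}
    (hg : ∀ x ∈ s, t ≤ ‖g x‖) (ht : 0 ≤ t) :
    t ^ 2 * μ.real s ≤ ‖ContinuousMap.toLp 2 μ 𝕜 g‖ ^ 2 := by
  have hint : Integrable (fun x => ‖g x‖ ^ 2) μ :=
    (g.continuous.norm.pow 2).integrable_of_hasCompactSupport (.of_compactSpace _)
  calc t ^ 2 * μ.real s ≤ t ^ 2 * μ.real {x | t ^ 2 ≤ ‖g x‖ ^ 2} := by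
        refine mul_le_mul_of_nonneg_left (measureReal_mono fun x hx => ?_) (by positivity)
        exact pow_le_pow_left₀ ht (hg x hx) 2
    _ ≤ ∫ x, ‖g x‖ ^ 2 ∂μ :=
        mul_meas_ge_le_integral_of_nonneg (.of_forall fun x => by positivity) hint _
    _ = _ := (g.norm_toLp_two_sq μ).symm

end ContinuousL2

theorem toLp_partialSum (n : ℕ) (f : C(UnitCircle, ℂ)) :
    ContinuousMap.toLp 2 AddCircle.haarAddCircle ℂ (partialSum n f) =
      ∑ k ∈ Finset.Icc (-(n : ℤ)) n,
        inner ℂ (fourierLp 2 k) (ContinuousMap.toLp 2 AddCircle.haarAddCircle ℂ f) •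
          fourierLp 2 k := by
  simp_rw [partialSum, map_sum, map_smul]
  refine Finset.sum_congr rfl fun k _ => ?_
  rw [← fourierCoeff_toLp, ← fourierBasis_repr, fourierBasis.repr_apply_apply, coe_fourierBasis]

theorem norm_toLp_partialSum_le (n : ℕ) (f : C(UnitCircle, ℂ)) :
    ‖ContinuousMap.toLp 2 AddCircle.haarAddCircle ℂ (partialSum n f)‖ ≤
      ‖ContinuousMap.toLp 2 AddCircle.haarAddCircle ℂ f‖ := by
  rw [toLp_partialSum]
  exact orthonormal_fourier.norm_sum_inner_smul_le _ _

/-- If the restrictions `{sₙ f |_E : n ∈ ℕ}` are dense in `C(E)` for a compact `E` and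
continuous `f`, then `E` has Lebesgue (Haar) measure zero. -/
theorem stmt14 (f : C(UnitCircle, ℂ)) (E : Set UnitCircle) (hE : IsCompact E)
    (hdense : Dense (Set.range fun n => (partialSum n ⇑f).restrict E)) :
    AddCircle.haarAddCircle E = 0 := by
  by_contra hE0
  have : CompactSpace E := isCompact_iff_compactSpace.mp hE
  set μ : Measure UnitCircle := AddCircle.haarAddCircle
  set F := ContinuousMap.toLp 2 μ ℂ f
  have hbound : ∀ t, 0 ≤ t → t ^ 2 * μ.real E ≤ ‖F‖ ^ 2 := by
    intro t ht
    obtain ⟨-, ⟨n, rfl⟩, hn⟩ := hdense.exists_forall_le_norm ht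
    exact (ContinuousMap.sq_mul_measureReal_le_norm_toLp_sq μ (fun x hx => hn ⟨x, hx⟩) ht).trans
      (pow_le_pow_left₀ (norm_nonneg _) (norm_toLp_partialSum_le n f) 2)
  have hpos : 0 < μ.real E := ENNReal.toReal_pos hE0 (measure_ne_top μ E)
  have hgrow : Tendsto (fun t : ℝ => t ^ 2 * μ.real E) atTop atTop :=
    (tendsto_pow_atTop two_ne_zero).atTop_mul_const hpos
  obtain ⟨t, ht, hlarge⟩ := ((eventually_ge_atTop 0).and (hgrow.eventually_gt_atTop _)).exists
  exact (hbound t ht).not_gt hlarge
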